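/- Soft-thresholding optimality: for a matrix G ∈ ℂ^{m×n} with SVD G = U diag(σ) V* and τ > 0, the matrix S_τ(G) = U diag((σ−τ)⁺) V* is the unique minimizer of X ↦ τ‖X‖_* + ½‖X − G‖_F², where ‖·‖_* is the nuclear norm and ‖·‖_F the Frobenius norm. -/

import Mathlib

open Matrix ComplexOrder

/-- Nuclear norm: the sum of the singular values of `X`, i.e. the square roots of the
eigenvalues of `Xᴴ * X`. -/
noncomputable def nuclearNorm {m n : ℕ} (X : Matrix (Fin m) (Fin n) ℂ) : ℝ :=
  ∑ i, Real.sqrt ((Matrix.posSemidef_conjTranspose_mul_self X).1.eigenvalues i)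

/-- Squared Frobenius norm. -/
noncomputable def frobSq {m n : ℕ} (X : Matrix (Fin m) (Fin n) ℂ) : ℝ :=
  ∑ i, ∑ j, ‖X i j‖ ^ 2

/-!
Write `p = (σ - τ)⁺` and `q = min σ τ`, so that `G = S + D` with `S = U diag(p) V*` and
`D = U diag(q) V*`. Since `0 ≤ q ≤ τ`, the spectral norm of `D` is at most `τ`, and trace duality
gives `Re⟨D, X⟩ ≤ τ ‖X‖_*` for every `X`; at `X = S` this is an equality because `p q = τ p`.
Hence `D / τ` is a subgradient of the nuclear norm at `S`, and expanding the square shows that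
the objective at `X` exceeds its value at `S` by at least `½ ‖X - S‖_F²`.
-/

open scoped Matrix.Norms.L2Operator InnerProductSpace

section FrobeniusInner

variable {m n : Type*} [Fintype m] [Fintype n]

noncomputable def frobInner (A B : Matrix m n ℂ) : ℝ :=
  (trace (Aᴴ * B)).re

lemma frobInner_comm (A B : Matrix m n ℂ) : frobInner A B = frobInner B A := by
  rw [frobInner, ← Complex.conj_re, ← Complex.star_def, ← trace_conjTranspose, conjTranspose_mul,
    conjTranspose_conjTranspose, frobInner]

lemma frobInner_sub_left (A B C : Matrix m n ℂ) :
    frobInner (A - B) C = frobInner A C - frobInner B C := by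
  simp only [frobInner, conjTranspose_sub, Matrix.sub_mul, trace_sub, Complex.sub_re]

lemma frobInner_sub_right (A B C : Matrix m n ℂ) :
    frobInner A (B - C) = frobInner A B - frobInner A C := by
  simp only [frobInner, Matrix.mul_sub, trace_sub, Complex.sub_re]

end FrobeniusInner

section FrobeniusNorm

variable {m n : ℕ}

lemma frobSq_eq_frobInner_self (A : Matrix (Fin m) (Fin n) ℂ) : frobSq A = frobInner A A := by
  rw [frobSq, frobInner, trace, Complex.re_sum, Finset.sum_comm]
  refine Finset.sum_congr rfl fun j _ => ?_
  simp only [diag_apply, mul_apply, conjTranspose_apply, Complex.re_sum, Complex.star_def,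
    Complex.conj_mul', ← Complex.ofReal_pow, Complex.ofReal_re]

lemma frobSq_sub (A B : Matrix (Fin m) (Fin n) ℂ) :
    frobSq (A - B) = frobSq A - 2 * frobInner A B + frobSq B := by
  simp only [frobSq_eq_frobInner_self, frobInner_sub_left, frobInner_sub_right, frobInner_comm B A]
  ring

lemma frobSq_sub_comm (A B : Matrix (Fin m) (Fin n) ℂ) : frobSq (A - B) = frobSq (B - A) := by
  simp only [frobSq, Matrix.sub_apply, norm_sub_rev]

lemma frobSq_pos {A : Matrix (Fin m) (Fin n) ℂ} (hA : A ≠ 0) : 0 < frobSq A := by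
  obtain ⟨i, j, hij⟩ : ∃ i j, A i j ≠ 0 := by
    by_contra! h
    exact hA (ext h)
  exact Finset.sum_pos' (fun _ _ => by positivity) ⟨i, Finset.mem_univ _,
    Finset.sum_pos' (fun _ _ => by positivity) ⟨j, Finset.mem_univ _, by positivity⟩⟩

/-- The hypotheses give the subgradient inequality `τ * N X ≥ τ * N S + frobInner (X - S) (G - S)`;
completing the square turns it into quadratic growth of the objective around `S`. -/
lemma add_half_frobSq_le_of_frobInner {G S X : Matrix (Fin m) (Fin n) ℂ}
    {N : Matrix (Fin m) (Fin n) ℂ → ℝ} {τ : ℝ} (hS : frobInner S (G - S) = τ * N S)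
    (hX : frobInner X (G - S) ≤ τ * N X) :
    τ * N S + 1 / 2 * frobSq (S - G) + 1 / 2 * frobSq (X - S) ≤
      τ * N X + 1 / 2 * frobSq (X - G) := by
  have hXG : frobSq (X - G) = frobSq (X - S) - 2 * frobInner (X - S) (G - S) + frobSq (G - S) := by
    rw [← frobSq_sub, sub_sub_sub_cancel_right]
  rw [hXG, frobSq_sub_comm S G, frobInner_sub_left]
  linarith

end FrobeniusNorm

lemma conjTranspose_mul_unitary_conj {m n : Type*} [Fintype m] [DecidableEq m]
    [Fintype n] {U : Matrix m m ℂ} (hU : U ∈ unitaryGroup m ℂ) (V : Matrix n n ℂ)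
    (A B : Matrix m n ℂ) :
    (U * A * Vᴴ)ᴴ * (U * B * Vᴴ) = V * (Aᴴ * B) * Vᴴ := by
  simp only [conjTranspose_mul, conjTranspose_conjTranspose, Matrix.mul_assoc]
  rw [← Matrix.mul_assoc Uᴴ, ← star_eq_conjTranspose, Unitary.star_mul_self_of_mem hU,
    Matrix.one_mul]

lemma Matrix.IsHermitian.sum_comp_eigenvalues_of_eq_unitary_conj {𝕜 n : Type*} [RCLike 𝕜]
    [Fintype n] [DecidableEq n] {A V : Matrix n n 𝕜} (hA : A.IsHermitian) (hV : V ∈ unitaryGroup n 𝕜)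
    {d : n → ℝ} (h : A = V * diagonal (fun i => (d i : 𝕜)) * Vᴴ) (f : ℝ → ℝ) :
    ∑ i, f (hA.eigenvalues i) = ∑ i, f (d i) := by
  have hcharpoly : A.charpoly = (diagonal fun i => (d i : 𝕜)).charpoly := by
    rw [h, Matrix.mul_assoc, charpoly_mul_comm, Matrix.mul_assoc, ← star_eq_conjTranspose,
      Unitary.star_mul_self_of_mem hV, Matrix.mul_one]
  have hroots : Multiset.map (fun i => (hA.eigenvalues i : 𝕜)) Finset.univ.val =
      Multiset.map (fun i => (d i : 𝕜)) Finset.univ.val := by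
    rw [← Function.comp_def, ← hA.roots_charpoly_eq_eigenvalues, hcharpoly, charpoly_diagonal,
      Polynomial.roots_prod _ _
        (Finset.prod_ne_zero_iff.mpr fun i _ => Polynomial.X_sub_C_ne_zero _)]
    simp
  have hmult : Multiset.map hA.eigenvalues Finset.univ.val = Multiset.map d Finset.univ.val := by
    simpa [Multiset.map_map, Function.comp_def] using congrArg (Multiset.map RCLike.re) hroots
  rw [Finset.sum_eq_multiset_sum, Finset.sum_eq_multiset_sum, ← Function.comp_def f,
    ← Function.comp_def f, ← Multiset.map_map, ← Multiset.map_map, hmult]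

lemma nuclearNorm_nonneg {m n : ℕ} (X : Matrix (Fin m) (Fin n) ℂ) : 0 ≤ nuclearNorm X :=
  Finset.sum_nonneg fun _ _ => Real.sqrt_nonneg _

/-- Evaluate the trace in an orthonormal eigenbasis `b` of `Xᴴ * X`: the `‖X b i‖` are the singular
values of `X`, while `‖D b i‖ ≤ ‖D‖`. -/
lemma frobInner_le_l2_opNorm_mul_nuclearNorm {m n : ℕ} (D X : Matrix (Fin m) (Fin n) ℂ) :
    frobInner D X ≤ ‖D‖ * nuclearNorm X := by
  set hA := (posSemidef_conjTranspose_mul_self X).1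
  set b := hA.eigenvectorBasis
  have htrace : trace (Dᴴ * X) = ∑ i, ⟪toEuclideanLin D (b i), toEuclideanLin X (b i)⟫_ℂ := by
    rw [← trace_toLin_eq _ (PiLp.basisFun 2 ℂ _), ← toLpLin_eq_toLin,
      LinearMap.trace_eq_sum_inner _ b, toLpLin_mul _ 2, toEuclideanLin_conjTranspose_eq_adjoint]
    simp only [LinearMap.comp_apply, LinearMap.adjoint_inner_right]
  have hD (i) : ‖toEuclideanLin D (b i)‖ ≤ ‖D‖ := by
    simpa [b.orthonormal.1 i, toLpLin_apply] using l2_opNorm_mulVec D (b i)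
  have hX (i) : ‖toEuclideanLin X (b i)‖ ^ 2 = hA.eigenvalues i := by
    rw [← inner_self_eq_norm_sq (𝕜 := ℂ), ← LinearMap.adjoint_inner_right,
      ← toEuclideanLin_conjTranspose_eq_adjoint, ← LinearMap.comp_apply, ← toLpLin_mul,
      toLpLin_apply, hA.mulVec_eigenvectorBasis]
    simp [b, inner_self_eq_norm_sq_to_K, hA.eigenvectorBasis.orthonormal.1 i]
  rw [frobInner, nuclearNorm, htrace, Complex.re_sum, Finset.mul_sum]
  refine Finset.sum_le_sum fun i _ => ?_
  calc (⟪toEuclideanLin D (b i), toEuclideanLin X (b i)⟫_ℂ).re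
      ≤ ‖toEuclideanLin D (b i)‖ * ‖toEuclideanLin X (b i)‖ := re_inner_le_norm (𝕜 := ℂ) _ _
    _ ≤ ‖D‖ * ‖toEuclideanLin X (b i)‖ := by gcongr; exact hD i
    _ = _ := by rw [← hX, Real.sqrt_sq (norm_nonneg _)]

def rectDiag (m n : ℕ) (d : ℕ → ℝ) : Matrix (Fin m) (Fin n) ℂ :=
  of fun i j => if (i : ℕ) = j then (d i : ℂ) else 0

section RectDiag

variable {m n : ℕ}

lemma rectDiag_sub (d e : ℕ → ℝ) : rectDiag m n d - rectDiag m n e = rectDiag m n (d - e) := by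
  ext i j
  by_cases h : (i : ℕ) = j <;> simp [rectDiag, h]

lemma rectDiag_conjTranspose_mul (d e : ℕ → ℝ) :
    (rectDiag m n d)ᴴ * rectDiag m n e =
      diagonal fun j : Fin n => ((if (j : ℕ) < m then d j * e j else 0 : ℝ) : ℂ) := by
  ext j j'
  simp only [mul_apply, rectDiag, conjTranspose_apply, of_apply, diagonal_apply, apply_ite star,
    star_zero, ite_mul, mul_ite, zero_mul, mul_zero]
  rw [Fin.sum_univ_eq_sum_range (fun i => if i = (j' : ℕ) then if i = (j : ℕ) then
    star (d i : ℂ) * e i else 0 else 0), Finset.sum_ite_eq']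
  by_cases hj : j = j'
  · subst hj; split_ifs <;> simp_all
  · simp [hj, Fin.val_ne_of_ne (Ne.symm hj)]

variable {U : Matrix (Fin m) (Fin m) ℂ} {V : Matrix (Fin n) (Fin n) ℂ}

lemma frobInner_unitary_conj_rectDiag (hU : U ∈ unitaryGroup (Fin m) ℂ)
    (hV : V ∈ unitaryGroup (Fin n) ℂ) (d e : ℕ → ℝ) :
    frobInner (U * rectDiag m n d * Vᴴ) (U * rectDiag m n e * Vᴴ) =
      ∑ j : Fin n, if (j : ℕ) < m then d j * e j else 0 := by
  rw [frobInner, conjTranspose_mul_unitary_conj hU, trace_mul_cycle, ← Matrix.mul_assoc,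
    ← star_eq_conjTranspose, Unitary.star_mul_self_of_mem hV, Matrix.one_mul,
    rectDiag_conjTranspose_mul, trace_diagonal, Complex.re_sum]
  simp only [Complex.ofReal_re]

lemma nuclearNorm_unitary_conj_rectDiag (hU : U ∈ unitaryGroup (Fin m) ℂ)
    (hV : V ∈ unitaryGroup (Fin n) ℂ) {d : ℕ → ℝ} (hd : ∀ k, 0 ≤ d k) :
    nuclearNorm (U * rectDiag m n d * Vᴴ) = ∑ j : Fin n, if (j : ℕ) < m then d j else 0 := by
  rw [nuclearNorm, IsHermitian.sum_comp_eigenvalues_of_eq_unitary_conj _ hV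
    (d := fun j : Fin n => if (j : ℕ) < m then d j * d j else 0)
    (by rw [conjTranspose_mul_unitary_conj hU, rectDiag_conjTranspose_mul]; rfl)]
  refine Finset.sum_congr rfl fun j _ => ?_
  split_ifs
  · exact Real.sqrt_mul_self (hd j)
  · exact Real.sqrt_zero

lemma l2_opNorm_unitary_conj_rectDiag_le (hU : U ∈ unitaryGroup (Fin m) ℂ)
    (hV : V ∈ unitaryGroup (Fin n) ℂ) {d : ℕ → ℝ} {τ : ℝ} (hd : ∀ k, |d k| ≤ τ) :
    ‖U * rectDiag m n d * Vᴴ‖ ≤ τ := by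
  have hτ : 0 ≤ τ := (abs_nonneg _).trans (hd 0)
  rw [mul_self_le_mul_self_iff (norm_nonneg _) hτ, ← l2_opNorm_conjTranspose_mul_self,
    conjTranspose_mul_unitary_conj hU, rectDiag_conjTranspose_mul, ← star_eq_conjTranspose,
    CStarRing.norm_mul_mem_unitary _ (Unitary.star_mem hV), CStarRing.norm_mem_unitary_mul _ hV,
    l2_opNorm_diagonal]
  refine pi_norm_le_iff_of_nonneg (by positivity) |>.mpr fun j => ?_
  split_ifs
  · rw [Complex.norm_real, Real.norm_eq_abs, abs_mul]
    exact mul_le_mul (hd j) (hd j) (abs_nonneg _) hτ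
  · simpa using mul_nonneg hτ hτ

end RectDiag

theorem soft_thresholding_unique_minimizer
    (m n : ℕ) (U : Matrix (Fin m) (Fin m) ℂ) (V : Matrix (Fin n) (Fin n) ℂ)
    (hU : U ∈ Matrix.unitaryGroup (Fin m) ℂ)
    (hV : V ∈ Matrix.unitaryGroup (Fin n) ℂ)
    (σ : ℕ → ℝ) (hσ : ∀ k, 0 ≤ σ k) (τ : ℝ) (hτ : 0 < τ)
    (G : Matrix (Fin m) (Fin n) ℂ)
    (hG : G = U * (Matrix.of fun (i : Fin m) (j : Fin n) =>
      if (i : ℕ) = (j : ℕ) then ((σ (i : ℕ) : ℝ) : ℂ) else 0) * Vᴴ) :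
    ∀ X : Matrix (Fin m) (Fin n) ℂ,
      X ≠ U * (Matrix.of fun (i : Fin m) (j : Fin n) =>
        if (i : ℕ) = (j : ℕ) then ((max (σ (i : ℕ) - τ) 0 : ℝ) : ℂ) else 0) * Vᴴ →
      τ * nuclearNorm (U * (Matrix.of fun (i : Fin m) (j : Fin n) =>
          if (i : ℕ) = (j : ℕ) then ((max (σ (i : ℕ) - τ) 0 : ℝ) : ℂ) else 0) * Vᴴ)
        + (1 / 2) * frobSq ((U * (Matrix.of fun (i : Fin m) (j : Fin n) =>
          if (i : ℕ) = (j : ℕ) then ((max (σ (i : ℕ) - τ) 0 : ℝ) : ℂ) else 0) * Vᴴ) - G)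
      < τ * nuclearNorm X + (1 / 2) * frobSq (X - G) := by
  intro X hX
  set p : ℕ → ℝ := fun k => max (σ k - τ) 0
  set q : ℕ → ℝ := fun k => min (σ k) τ
  change G = U * rectDiag m n σ * Vᴴ at hG
  change X ≠ U * rectDiag m n p * Vᴴ at hX
  change τ * nuclearNorm (U * rectDiag m n p * Vᴴ) + 1 / 2 * frobSq (U * rectDiag m n p * Vᴴ - G)
    < _
  have hpq (k) : p k * q k = τ * p k := by
    rcases le_total (σ k) τ with h | h <;> simp [p, q, h, mul_comm]
  have hGS : G - U * rectDiag m n p * Vᴴ = U * rectDiag m n q * Vᴴ := by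
    rw [hG, ← Matrix.sub_mul, ← Matrix.mul_sub, rectDiag_sub]
    congr
    funext k
    rcases le_total (σ k) τ with h | h <;> simp [p, q, h]
  refine lt_of_lt_of_le ?_ (add_half_frobSq_le_of_frobInner
    (S := U * rectDiag m n p * Vᴴ) (N := nuclearNorm) ?_ ?_)
  · linarith [frobSq_pos (sub_ne_zero.2 hX)]
  · rw [hGS, frobInner_unitary_conj_rectDiag hU hV,
      nuclearNorm_unitary_conj_rectDiag hU hV (d := p) fun k => le_max_right _ _, Finset.mul_sum]
    simp only [hpq, mul_ite, mul_zero]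
  · rw [hGS, frobInner_comm]
    refine (frobInner_le_l2_opNorm_mul_nuclearNorm _ X).trans ?_
    gcongr
    · exact nuclearNorm_nonneg X
    exact l2_opNorm_unitary_conj_rectDiag_le hU hV fun k =>
      abs_le.2 ⟨by linarith [le_min (hσ k) hτ.le], min_le_right _ _⟩
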